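/- arXiv:2409.14528 — 3 statements merged into one kernel-verified Lean document; each statement's English description precedes it below -/
import Mathlib

section
/- Let G be a connected loopless MP-digraph that is not a coherently oriented cycle, and suppose that G has a unique dynamical module. Then the multipath matroid M_G is isomorphic to the uniform matroid U_{1,|E(G)|}. -/
set_option autoImplicit false

noncomputable section

attribute [local instance] Classical.propDecidable

/-- A (finite) directed multigraph: finitely many vertices and edges, each edge
has a source and a target.  (Loops and, a priori, parallel edges are allowed;
the paper's convention of at most one edge between an ordered pair of distinct
vertices is imposed via `DiGraph.EdgeUnique`.) -/
structure DiGraph where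
  V : Type
  E : Type
  [fintV : Fintype V]
  [decV : DecidableEq V]
  [fintE : Fintype E]
  [decE : DecidableEq E]
  s : E → V
  t : E → V

attribute [instance] DiGraph.fintV DiGraph.decV DiGraph.fintE DiGraph.decE

namespace DiGraph

/-- For each ordered pair of *distinct* vertices there is at most one edge. -/
def EdgeUnique (G : DiGraph) : Prop :=
  ∀ e f : G.E, G.s e = G.s f → G.t e = G.t f → G.s e ≠ G.t e → e = f

/-- G has no loops. -/
def Loopless (G : DiGraph) : Prop := ∀ e : G.E, G.s e ≠ G.t e

/-- A coherently oriented cycle, given as the (cyclically ordered) list of its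
edges: the list is nonempty, has no repeated edges, visits no vertex twice,
and the target of each edge is the source of the next one (cyclically).
A loop is a coherently oriented cycle of length 1. -/
def IsCohCycle (G : DiGraph) (c : List G.E) : Prop :=
  c ≠ [] ∧ c.Nodup ∧ (c.map G.s).Nodup ∧
    ∀ i : Fin c.length,
      G.t (c.get i) =
        G.s (c.get ⟨(i.val + 1) % c.length,
          Nat.mod_lt _ (Nat.lt_of_le_of_lt (Nat.zero_le _) i.isLt)⟩)

/-- `m` is (the edge set of) a multipath of `G`: the corresponding spanning
subgraph has no loops, in-degree and out-degree at most one at each vertex, and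
contains no coherently oriented cycle; equivalently, every connected component
is a single vertex or a simple (directed) path. -/
def IsMultipath (G : DiGraph) (m : Finset G.E) : Prop :=
  (∀ e ∈ m, G.s e ≠ G.t e) ∧
  (∀ e ∈ m, ∀ f ∈ m, G.s e = G.s f → e = f) ∧
  (∀ e ∈ m, ∀ f ∈ m, G.t e = G.t f → e = f) ∧
  ¬∃ c : List G.E, IsCohCycle G c ∧ ∀ g ∈ c, g ∈ m

/-- The forbidden pattern (A): vertices v0,v1,v2 and edges (v1,v0), (v0,v2), (v1,v2). -/
def HasPatternA (G : DiGraph) : Prop :=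
  ∃ v0 v1 v2 : G.V, v0 ≠ v1 ∧ v0 ≠ v2 ∧ v1 ≠ v2 ∧
    (∃ e : G.E, G.s e = v1 ∧ G.t e = v0) ∧
    (∃ e : G.E, G.s e = v0 ∧ G.t e = v2) ∧
    (∃ e : G.E, G.s e = v1 ∧ G.t e = v2)

/-- The reverse of pattern (A). -/
def HasPatternArev (G : DiGraph) : Prop :=
  ∃ v0 v1 v2 : G.V, v0 ≠ v1 ∧ v0 ≠ v2 ∧ v1 ≠ v2 ∧
    (∃ e : G.E, G.s e = v0 ∧ G.t e = v1) ∧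
    (∃ e : G.E, G.s e = v2 ∧ G.t e = v0) ∧
    (∃ e : G.E, G.s e = v2 ∧ G.t e = v1)

/-- The forbidden pattern (B): vertices v0,v1,v2,v3 and edges (v0,v1), (v2,v1), (v2,v3). -/
def HasPatternB (G : DiGraph) : Prop :=
  ∃ v0 v1 v2 v3 : G.V,
    v0 ≠ v1 ∧ v0 ≠ v2 ∧ v0 ≠ v3 ∧ v1 ≠ v2 ∧ v1 ≠ v3 ∧ v2 ≠ v3 ∧
    (∃ e : G.E, G.s e = v0 ∧ G.t e = v1) ∧
    (∃ e : G.E, G.s e = v2 ∧ G.t e = v1) ∧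
    (∃ e : G.E, G.s e = v2 ∧ G.t e = v3)

/-- The reverse of pattern (B). -/
def HasPatternBrev (G : DiGraph) : Prop :=
  ∃ v0 v1 v2 v3 : G.V,
    v0 ≠ v1 ∧ v0 ≠ v2 ∧ v0 ≠ v3 ∧ v1 ≠ v2 ∧ v1 ≠ v3 ∧ v2 ≠ v3 ∧
    (∃ e : G.E, G.s e = v1 ∧ G.t e = v0) ∧
    (∃ e : G.E, G.s e = v1 ∧ G.t e = v2) ∧
    (∃ e : G.E, G.s e = v3 ∧ G.t e = v2)

/-- (MP1): G contains no copy, up to reversing all orientations, of the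
patterns (A) and (B). -/
def MP1 (G : DiGraph) : Prop :=
  ¬HasPatternA G ∧ ¬HasPatternArev G ∧ ¬HasPatternB G ∧ ¬HasPatternBrev G

/-- (MP2): every coherently oriented cycle of length ≥ 2 (i.e. loops excluded)
is a connected component: any edge incident to a vertex of the cycle belongs
to the cycle. -/
def MP2 (G : DiGraph) : Prop :=
  ∀ c : List G.E, IsCohCycle G c → 2 ≤ c.length →
    ∀ f : G.E, (∃ g ∈ c, G.s g = G.s f ∨ G.s g = G.t f) → f ∈ c

def IsMPDigraph (G : DiGraph) : Prop := MP1 G ∧ MP2 G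

/-- The axioms (I1), (I2), (I3) for a family of independent sets of a matroid. -/
def IsIndepFamily {α : Type} [DecidableEq α] (I : Finset α → Prop) : Prop :=
  I ∅ ∧ (∀ A B : Finset α, I A → B ⊆ A → I B) ∧
    ∀ A B : Finset α, I A → I B → B.card < A.card →
      ∃ x ∈ A, x ∉ B ∧ I (insert x B)

/-- `m` is the edge set of a linear sink (two non-loop edges with a common
target and distinct sources). -/
def IsLinearSinkSet (G : DiGraph) (m : Finset G.E) : Prop :=
  ∃ e1 e2 : G.E, e1 ≠ e2 ∧ m = {e1, e2} ∧ G.t e1 = G.t e2 ∧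
    G.s e1 ≠ G.s e2 ∧ G.s e1 ≠ G.t e1 ∧ G.s e2 ≠ G.t e2

/-- `m` is the edge set of a linear source (two non-loop edges with a common
source and distinct targets). -/
def IsLinearSourceSet (G : DiGraph) (m : Finset G.E) : Prop :=
  ∃ e1 e2 : G.E, e1 ≠ e2 ∧ m = {e1, e2} ∧ G.s e1 = G.s e2 ∧
    G.t e1 ≠ G.t e2 ∧ G.s e1 ≠ G.t e1 ∧ G.s e2 ≠ G.t e2

/-- `m` is the edge set of a coherently oriented cycle (possibly a loop). -/
def IsCohCycleSet (G : DiGraph) (m : Finset G.E) : Prop :=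
  ∃ c : List G.E, IsCohCycle G c ∧ m = c.toFinset

/-- Two vertices are adjacent if they are the endpoints of a common edge. -/
def adj (G : DiGraph) (v w : G.V) : Prop :=
  ∃ e : G.E, (G.s e = v ∧ G.t e = w) ∨ (G.s e = w ∧ G.t e = v)

/-- Two vertices lie in the same connected component. -/
def connRel (G : DiGraph) : G.V → G.V → Prop := Relation.EqvGen (adj G)

/-- G is connected. -/
def ConnectedD (G : DiGraph) : Prop := Nonempty G.V ∧ ∀ v w : G.V, connRel G v w

/-- The number of connected components of G (isolated vertices count). -/
def numComponents (G : DiGraph) : ℕ :=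
  Nat.card (Quotient (Relation.EqvGen.setoid (adj G)))

/-- `S` is the set of edges of one of the connected components of `G`. -/
def IsComponentEdges (G : DiGraph) (S : Finset G.E) : Prop :=
  ∃ v : G.V, S = Finset.univ.filter (fun e => connRel G v (G.s e))

/-- in-degree of `v` in the subgraph spanned by the edges of `R`. -/
def indegIn (G : DiGraph) (R : Finset G.E) (v : G.V) : ℕ :=
  (R.filter (fun e => G.t e = v)).card

/-- out-degree of `v` in the subgraph spanned by the edges of `R`. -/
def outdegIn (G : DiGraph) (R : Finset G.E) (v : G.V) : ℕ :=
  (R.filter (fun e => G.s e = v)).card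

def indeg (G : DiGraph) (v : G.V) : ℕ := indegIn G Finset.univ v
def outdeg (G : DiGraph) (v : G.V) : ℕ := outdegIn G Finset.univ v

/-- `v` is a vertex of the subgraph spanned by the edge set `R`. -/
def IncidentTo (G : DiGraph) (R : Finset G.E) (v : G.V) : Prop :=
  ∃ e ∈ R, G.s e = v ∨ G.t e = v

/-- `v` is stable in the subgraph spanned by `R`. -/
def StableIn (G : DiGraph) (R : Finset G.E) (v : G.V) : Prop :=
  indegIn G R v = 0 ∨ outdegIn G R v = 0

/-- `v` is unstable in `G`. -/
def UnstableG (G : DiGraph) (v : G.V) : Prop :=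
  0 < indeg G v ∧ 0 < outdeg G v

/-- adjacency within the subgraph spanned by `R`. -/
def adjIn (G : DiGraph) (R : Finset G.E) (a b : G.V) : Prop :=
  ∃ g ∈ R, (G.s g = a ∧ G.t g = b) ∨ (G.s g = b ∧ G.t g = a)

/-- The subgraph spanned by the edge set `R` is connected. -/
def EdgeConnected (G : DiGraph) (R : Finset G.E) : Prop :=
  ∀ e ∈ R, ∀ f ∈ R, Relation.EqvGen (adjIn G R) (G.s e) (G.s f)

/-- `R` spans a dynamical region of `G`: it is connected, has at least one
edge, every boundary vertex is unstable in `G` but stable in `R` and in its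
complement, and no edge of `R` lies on an oriented cycle of `G` not contained
in `R`. -/
def IsDynRegion (G : DiGraph) (R : Finset G.E) : Prop :=
  R.Nonempty ∧ EdgeConnected G R ∧
  (∀ v : G.V, IncidentTo G R v → IncidentTo G (Finset.univ \ R) v →
     UnstableG G v ∧ StableIn G R v ∧ StableIn G (Finset.univ \ R) v) ∧
  (∀ c : List G.E, IsCohCycle G c → (∃ g ∈ c, g ∈ R) → ∀ g ∈ c, g ∈ R)

/-- A dynamical module is a minimal dynamical region. -/
def IsDynModule (G : DiGraph) (R : Finset G.E) : Prop :=
  IsDynRegion G R ∧ ∀ R' ⊆ R, IsDynRegion G R' → R' = R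

/-- `G` is a sink on `n+1` vertices. -/
def IsSinkGraph (G : DiGraph) : Prop :=
  Loopless G ∧ Fintype.card G.V = Fintype.card G.E + 1 ∧
    ∃! v : G.V, ∀ e : G.E, G.t e = v

/-- `G` is a source on `n+1` vertices. -/
def IsSourceGraph (G : DiGraph) : Prop :=
  Loopless G ∧ Fintype.card G.V = Fintype.card G.E + 1 ∧
    ∃! v : G.V, ∀ e : G.E, G.s e = v

/-- `R` spans a sink: all its edges are non-loops with a common target and
pairwise distinct sources. -/
def IsSinkSet (G : DiGraph) (R : Finset G.E) : Prop :=
  ∃ v : G.V, (∀ e ∈ R, G.t e = v ∧ G.s e ≠ v) ∧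
    ∀ e ∈ R, ∀ f ∈ R, G.s e = G.s f → e = f

/-- `R` spans a source. -/
def IsSourceSet (G : DiGraph) (R : Finset G.E) : Prop :=
  ∃ v : G.V, (∀ e ∈ R, G.s e = v ∧ G.t e ≠ v) ∧
    ∀ e ∈ R, ∀ f ∈ R, G.t e = G.t f → e = f

/-- The whole digraph `G` is a coherently oriented cycle. -/
def IsCohCycleGraph (G : DiGraph) : Prop :=
  ∃ c : List G.E, IsCohCycle G c ∧ (∀ e : G.E, e ∈ c) ∧
    ∀ v : G.V, ∃ g ∈ c, G.s g = v

/-- Rank function of the multipath matroid: the size of a largest multipath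
contained in `A`. -/
def mrank (G : DiGraph) (A : Finset G.E) : ℕ :=
  (A.powerset.filter (fun m => IsMultipath G m)).sup Finset.card

/-- The Tutte polynomial of the multipath matroid of `G`, evaluated at `(x,y)`. -/
def tutte (G : DiGraph) (x y : ℤ) : ℤ :=
  ∑ A : Finset G.E,
    (x - 1) ^ (mrank G Finset.univ - mrank G A) *
      (y - 1) ^ (A.card - mrank G A)

/-- `e` is a loop of the multipath matroid. -/
def IsMatroidLoop (G : DiGraph) (e : G.E) : Prop := ¬IsMultipath G {e}

/-- `e` is a coloop of the multipath matroid: it belongs to every maximal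
independent set. -/
def IsColoop (G : DiGraph) (e : G.E) : Prop :=
  ∀ m : Finset G.E, IsMultipath G m →
    (∀ m' : Finset G.E, IsMultipath G m' → m ⊆ m' → m' = m) → e ∈ m

/-- The digraph obtained from `G` by deleting the edge `e`. -/
def deleteEdge (G : DiGraph) (e : G.E) : DiGraph where
  V := G.V
  E := {f : G.E // f ≠ e}
  s := fun f => G.s f.val
  t := fun f => G.t f.val

/-- The vertex set of the MP-contraction `G ⫽ e`: the vertices of `G` other
than the endpoints of `e`, together with a new vertex `x = Sum.inr ()`. -/
def CVert (G : DiGraph) (e : G.E) : Type :=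
  {u : G.V // u ≠ G.s e ∧ u ≠ G.t e} ⊕ Unit

instance (G : DiGraph) (e : G.E) : Fintype (CVert G e) := by
  unfold CVert; infer_instance

instance (G : DiGraph) (e : G.E) : DecidableEq (CVert G e) := by
  unfold CVert; infer_instance

/-- Source, in `G ⫽ e`, of the edge coming from the edge `f` of `G`
(for `e = (v,w)`, the new source is `x` iff `s f ∈ {v,w}` or `t f = w`). -/
def contrS (G : DiGraph) (e f : G.E) : CVert G e :=
  if h : G.s f = G.s e ∨ G.s f = G.t e ∨ G.t f = G.t e then Sum.inr ()
  else Sum.inl ⟨G.s f, by push_neg at h; exact ⟨h.1, h.2.1⟩⟩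

/-- Target, in `G ⫽ e`, of the edge coming from the edge `f` of `G`
(for `e = (v,w)`, the new target is `x` iff `t f ∈ {v,w}` or `s f = v`). -/
def contrT (G : DiGraph) (e f : G.E) : CVert G e :=
  if h : G.t f = G.s e ∨ G.t f = G.t e ∨ G.s f = G.s e then Sum.inr ()
  else Sum.inl ⟨G.t f, by push_neg at h; exact ⟨h.1, h.2.1⟩⟩

/-- The MP-contraction `G ⫽ e`. -/
def mpContract (G : DiGraph) (e : G.E) : DiGraph where
  V := CVert G e
  E := {f : G.E // f ≠ e}
  s := fun f => contrS G e f.val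
  t := fun f => contrT G e f.val

/-- The digraph `C̃_e(G)`: the MP-contraction `G ⫽ e` with all loops at the
new vertex `x` deleted. -/
def tildeC (G : DiGraph) (e : G.E) : DiGraph where
  V := CVert G e
  E := {f : G.E // f ≠ e ∧
         ¬(contrS G e f = Sum.inr () ∧ contrT G e f = Sum.inr ())}
  s := fun f => contrS G e f.val
  t := fun f => contrT G e f.val

/-- The classical contraction `G / e` of a non-loop edge `e = (v,w)`:
identify `w` with `v` and delete `e`. -/
def contractClassical (G : DiGraph) (e : G.E) (hne : G.s e ≠ G.t e) : DiGraph where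
  V := {u : G.V // u ≠ G.t e}
  E := {f : G.E // f ≠ e}
  s := fun f => if h : G.s f.val = G.t e then ⟨G.s e, hne⟩ else ⟨G.s f.val, h⟩
  t := fun f => if h : G.t f.val = G.t e then ⟨G.s e, hne⟩ else ⟨G.t f.val, h⟩

/-- A flowing k-colouring of `G`. -/
def IsFlowing (G : DiGraph) (k : ℕ) (c : G.V → Fin k) : Prop :=
  (∀ e : G.E, c (G.s e) ≠ c (G.t e)) ∧
  (∀ e f : G.E, G.t e = G.t f → c (G.s e) = c (G.s f)) ∧
  (∀ e f : G.E, G.s e = G.s f → c (G.t e) = c (G.t f))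

/-- The number of flowing k-colourings of `G`. -/
def tau (G : DiGraph) (k : ℕ) : ℕ :=
  Nat.card {c : G.V → Fin k // IsFlowing G k c}

/-- The spanning subgraph of `G` with edge set `S`. -/
def subgraphOn (G : DiGraph) (S : Finset G.E) : DiGraph where
  V := G.V
  E := {f : G.E // f ∈ S}
  s := fun f => G.s f.val
  t := fun f => G.t f.val

/-- The underlying undirected multigraph of `G` contains a cycle
(of length ≥ 1; a single loop, or two parallel/antiparallel edges, count). -/
def HasUndirCycle (G : DiGraph) : Prop :=
  ∃ (n : ℕ) (ed : Fin n → G.E) (vx : Fin n → G.V),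
    0 < n ∧ Function.Injective ed ∧ Function.Injective vx ∧
    ∀ i : Fin n,
      (G.s (ed i) = vx i ∧ G.t (ed i) = vx ⟨(i.val + 1) % n, Nat.mod_lt _ i.pos⟩) ∨
      (G.t (ed i) = vx i ∧ G.s (ed i) = vx ⟨(i.val + 1) % n, Nat.mod_lt _ i.pos⟩)

/-- The underlying undirected multigraph of `G` is a forest. -/
def IsForestD (G : DiGraph) : Prop := ¬HasUndirCycle G

/-- The underlying undirected multigraph of `G` is a tree. -/
def IsTreeD (G : DiGraph) : Prop := ConnectedD G ∧ IsForestD G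

/-- The multipath matroid of `G` is representable over the field `F`. -/
def RepOver (G : DiGraph) (F : Type) [Field F] : Prop :=
  ∃ (n : ℕ) (N : Matrix (Fin n) G.E F),
    ∀ m : Finset G.E, IsMultipath G m ↔
      LinearIndependent F (fun f : {x : G.E // x ∈ m} => N.transpose f.val)

end DiGraph

/-- A finite undirected multigraph. -/
structure Multigraph where
  V : Type
  E : Type
  [fintV : Fintype V]
  [decV : DecidableEq V]
  [fintE : Fintype E]
  [decE : DecidableEq E]
  ends : E → Sym2 V

attribute [instance] Multigraph.fintV Multigraph.decV Multigraph.fintE Multigraph.decE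

/-- The multigraph `M` has a cycle all of whose edges lie in `F`. -/
def Multigraph.HasCycleIn (M : Multigraph) (F : Finset M.E) : Prop :=
  ∃ (n : ℕ) (ed : Fin n → M.E) (vx : Fin n → M.V),
    0 < n ∧ Function.Injective ed ∧ Function.Injective vx ∧
    (∀ i : Fin n, ed i ∈ F) ∧
    ∀ i : Fin n, M.ends (ed i) = s(vx i, vx ⟨(i.val + 1) % n, Nat.mod_lt _ i.pos⟩)

/-!
MP2 and connectivity rule out coherently oriented cycles: one of length at least two
would be all of `G`. Every dynamical region contains a dynamical module, and the connected
pieces of the complement of a region are again regions; hence a unique module is all of `G`,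
and so is every region. On the other hand, if some vertex `v` is unstable, then either the
in-star of `v` or, by MP1, the out-star of the source of some edge into `v` is a proper
dynamical region. So every vertex is a pure source or a pure sink, and then the absence of
pattern (B) and its reverse, together with connectivity, forces any two edges to share their
source or their target: the multipaths are exactly the sets of at most one edge.
-/

namespace DiGraph

open Finset

variable {G : DiGraph}

lemma adj_symm {x y : G.V} (h : G.adj x y) : G.adj y x :=
  let ⟨e, he⟩ := h
  ⟨e, he.symm⟩

lemma ConnectedD.forall_of_adj_closed (hconn : G.ConnectedD) {P : G.V → Prop}
    (hP : ∀ ⦃x y⦄, G.adj x y → P x → P y) {v : G.V} (hv : P v) (x : G.V) : P x :=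
  have hequiv : Equivalence fun x y => P x ↔ P y := ⟨fun _ => Iff.rfl, Iff.symm, Iff.trans⟩
  (hequiv.eqvGen_iff.1 ((hconn.2 v x).mono fun _ _ hab =>
    ⟨hP hab, hP (adj_symm hab)⟩)).1 hv

def IsCohAcyclic (G : DiGraph) : Prop := ∀ c : List G.E, ¬G.IsCohCycle c

lemma IsCohCycle.exists_source_eq_target {c : List G.E} (hc : G.IsCohCycle c) {g : G.E}
    (hg : g ∈ c) : ∃ g' ∈ c, G.s g' = G.t g := by
  obtain ⟨i, rfl⟩ := List.mem_iff_get.1 hg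
  exact ⟨_, List.get_mem _ _, (hc.2.2.2 i).symm⟩

lemma MP2.isCohAcyclic (hMP2 : G.MP2) (hconn : G.ConnectedD) (hll : G.Loopless)
    (hnc : ¬G.IsCohCycleGraph) : G.IsCohAcyclic := by
  intro c hc
  rcases Nat.lt_or_ge c.length 2 with hlen | hlen
  · obtain ⟨e, rfl⟩ : ∃ e, c = [e] :=
      List.length_eq_one_iff.1 (by have := List.length_pos_iff.2 hc.1; omega)
    exact hll e (by simpa using (hc.2.2.2 ⟨0, by simp⟩).symm)
  have hclosed := hMP2 c hc hlen
  have hP : ∀ ⦃x y⦄, G.adj x y → (∃ g ∈ c, G.s g = x) → ∃ g ∈ c, G.s g = y := by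
    rintro x y ⟨h, ⟨rfl, rfl⟩ | ⟨rfl, rfl⟩⟩ ⟨g, hg, hgx⟩
    · exact hc.exists_source_eq_target (hclosed h ⟨g, hg, Or.inl hgx⟩)
    · exact ⟨h, hclosed h ⟨g, hg, Or.inr hgx⟩, rfl⟩
  obtain ⟨g₀, hg₀⟩ := List.exists_mem_of_ne_nil c hc.1
  have hall := hconn.forall_of_adj_closed hP ⟨g₀, hg₀, rfl⟩
  refine hnc ⟨c, hc, fun f => ?_, hall⟩
  obtain ⟨g, hg, hgf⟩ := hall (G.s f)
  exact hclosed f ⟨g, hg, Or.inl hgf⟩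

lemma indegIn_eq_zero_iff {R : Finset G.E} {v : G.V} :
    G.indegIn R v = 0 ↔ ∀ e ∈ R, G.t e ≠ v := by
  simp [indegIn, filter_eq_empty_iff]

lemma outdegIn_eq_zero_iff {R : Finset G.E} {v : G.V} :
    G.outdegIn R v = 0 ↔ ∀ e ∈ R, G.s e ≠ v := by
  simp [outdegIn, filter_eq_empty_iff]

lemma unstableG_of_target_eq_source {e f : G.E} {v : G.V} (he : G.t e = v) (hf : G.s f = v) :
    G.UnstableG v :=
  ⟨card_pos.2 ⟨e, mem_filter.2 ⟨mem_univ _, he⟩⟩, card_pos.2 ⟨f, mem_filter.2 ⟨mem_univ _, hf⟩⟩⟩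

lemma StableIn.of_subset_at {R R' : Finset G.E} {x : G.V} (hR : G.StableIn R x)
    (hsub : ∀ e ∈ R', G.s e = x ∨ G.t e = x → e ∈ R) : G.StableIn R' x := by
  simp only [StableIn, indegIn_eq_zero_iff, outdegIn_eq_zero_iff] at hR ⊢
  exact hR.imp (fun h e he hex => h e (hsub e he (Or.inr hex)) hex)
    (fun h e he hex => h e (hsub e he (Or.inl hex)) hex)

lemma boundary_of_in_out {R : Finset G.E} {x : G.V} (hR : ∀ e ∈ R, G.s e ≠ x)
    (hRc : ∀ e ∉ R, G.t e ≠ x) (hxR : G.IncidentTo R x) (hxRc : G.IncidentTo (univ \ R) x) :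
    G.UnstableG x ∧ G.StableIn R x ∧ G.StableIn (univ \ R) x := by
  obtain ⟨e, he, hex⟩ := hxR
  obtain ⟨f, hf, hfx⟩ := hxRc
  have hf : f ∉ R := (mem_sdiff.1 hf).2
  exact ⟨unstableG_of_target_eq_source (hex.resolve_left (hR e he))
      (hfx.resolve_right (hRc f hf)), Or.inr (outdegIn_eq_zero_iff.2 hR),
    Or.inl (indegIn_eq_zero_iff.2 fun e he => hRc e (mem_sdiff.1 he).2)⟩

lemma boundary_of_out_in {R : Finset G.E} {x : G.V} (hR : ∀ e ∈ R, G.t e ≠ x)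
    (hRc : ∀ e ∉ R, G.s e ≠ x) (hxR : G.IncidentTo R x) (hxRc : G.IncidentTo (univ \ R) x) :
    G.UnstableG x ∧ G.StableIn R x ∧ G.StableIn (univ \ R) x := by
  obtain ⟨e, he, hex⟩ := hxR
  obtain ⟨f, hf, hfx⟩ := hxRc
  have hf : f ∉ R := (mem_sdiff.1 hf).2
  exact ⟨unstableG_of_target_eq_source (hfx.resolve_left (hRc f hf))
      (hex.resolve_right (hR e he)), Or.inl (indegIn_eq_zero_iff.2 hR),
    Or.inr (outdegIn_eq_zero_iff.2 fun e he => hRc e (mem_sdiff.1 he).2)⟩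

lemma eqvGen_adjIn_source {S : Finset G.E} {e : G.E} {x : G.V} (he : e ∈ S)
    (hx : G.s e = x ∨ G.t e = x) : Relation.EqvGen (G.adjIn S) (G.s e) x := by
  rcases hx with rfl | rfl
  · exact .refl _
  · exact .rel _ _ ⟨e, he, Or.inl ⟨rfl, rfl⟩⟩

def inStar (G : DiGraph) (v : G.V) : Finset G.E := univ.filter fun e => G.t e = v

def outStar (G : DiGraph) (a : G.V) : Finset G.E := univ.filter fun e => G.s e = a

@[simp] lemma mem_inStar {v : G.V} {e : G.E} : e ∈ G.inStar v ↔ G.t e = v := by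
  simp [inStar]

@[simp] lemma mem_outStar {a : G.V} {e : G.E} : e ∈ G.outStar a ↔ G.s e = a := by
  simp [outStar]

lemma isDynRegion_inStar (hll : G.Loopless) (hacyc : G.IsCohAcyclic) {v : G.V} {p : G.E}
    (hp : G.t p = v) (hstar : ∀ k, G.t k = v → ∀ h, G.s h = G.s k → G.t h = v) :
    G.IsDynRegion (G.inStar v) := by
  refine ⟨⟨p, mem_inStar.2 hp⟩, fun e he f hf => ?_, ?_, fun c hc => (hacyc c hc).elim⟩
  · exact (eqvGen_adjIn_source he (Or.inr (mem_inStar.1 he))).trans _ _ _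
      (eqvGen_adjIn_source hf (Or.inr (mem_inStar.1 hf))).symm
  · intro x hx
    obtain ⟨k, hk, rfl | rfl⟩ := id hx
    · refine boundary_of_out_in (fun e he hex => hll k ?_) (fun h hh hhx => hh ?_) hx
      · rw [← hex, mem_inStar.1 he, mem_inStar.1 hk]
      · exact mem_inStar.2 (hstar k (mem_inStar.1 hk) h hhx)
    · rw [mem_inStar.1 hk] at hx ⊢
      exact boundary_of_in_out (fun e he hev => hll e (hev.trans (mem_inStar.1 he).symm))
        (fun h hh hhv => hh (mem_inStar.2 hhv)) hx

lemma isDynRegion_outStar (hll : G.Loopless) (hacyc : G.IsCohAcyclic) {a : G.V} {p : G.E}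
    (hp : G.s p = a) (hstar : ∀ k, G.s k = a → ∀ h, G.t h = G.t k → G.s h = a) :
    G.IsDynRegion (G.outStar a) := by
  refine ⟨⟨p, mem_outStar.2 hp⟩, fun e he f hf => ?_, ?_, fun c hc => (hacyc c hc).elim⟩
  · rw [mem_outStar.1 he, mem_outStar.1 hf]
    exact .refl _
  · intro x hx
    obtain ⟨k, hk, rfl | rfl⟩ := id hx
    · rw [mem_outStar.1 hk] at hx ⊢
      exact boundary_of_out_in (fun e he hea => hll e ((mem_outStar.1 he).trans hea.symm))
        (fun h hh hha => hh (mem_outStar.2 hha)) hx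
    · refine boundary_of_in_out (fun e he hex => hll k ?_) (fun h hh hhx => hh ?_) hx
      · rw [mem_outStar.1 hk, ← hex, mem_outStar.1 he]
      · exact mem_outStar.2 (hstar k (mem_outStar.1 hk) h hhx)

lemma source_eq_of_target_eq_outNbr (hA : ¬G.HasPatternA) (hB : ¬G.HasPatternB)
    (hll : G.Loopless) {a : G.V} {h₁ h₂ : G.E} (hs₁ : G.s h₁ = a) (hs₂ : G.s h₂ = a)
    (ht : G.t h₁ ≠ G.t h₂) {k h : G.E} (hk : G.s k = a) (hth : G.t h = G.t k) : G.s h = a := by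
  by_contra hx
  obtain ⟨k', hk'a, hk'w⟩ : ∃ k', G.s k' = a ∧ G.t k' ≠ G.t k := by
    by_cases hcase : G.t h₁ = G.t k
    · exact ⟨h₂, hs₂, fun hh => ht (hcase.trans hh.symm)⟩
    · exact ⟨h₁, hs₁, hcase⟩
  have haw : a ≠ G.t k := fun hh => hll k (hk.trans hh)
  have hk'a' : G.t k' ≠ a := fun hh => hll k' (hk'a.trans hh.symm)
  by_cases hxd : G.s h = G.t k'
  · exact hA ⟨G.t k', a, G.t k, hk'a', hk'w, haw, ⟨k', hk'a, rfl⟩, ⟨h, hxd, hth⟩, ⟨k, hk, rfl⟩⟩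
  · exact hB ⟨G.s h, G.t k, a, G.t k', fun hh => hll h (hh.trans hth.symm), hx, hxd,
      fun hh => haw hh.symm, fun hh => hk'w hh.symm, fun hh => hk'a' hh.symm,
      ⟨h, rfl, hth⟩, ⟨k, hk, rfl⟩, ⟨k', hk'a, rfl⟩⟩

lemma exists_isDynRegion_ne_univ (hll : G.Loopless) (hA : ¬G.HasPatternA)
    (hB : ¬G.HasPatternB) (hacyc : G.IsCohAcyclic) {v : G.V} (hv : G.UnstableG v) :
    ∃ R : Finset G.E, G.IsDynRegion R ∧ R ≠ univ := by
  obtain ⟨p, hp⟩ := card_pos.1 hv.1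
  obtain ⟨q, hq⟩ := card_pos.1 hv.2
  replace hp : G.t p = v := (mem_filter.1 hp).2
  replace hq : G.s q = v := (mem_filter.1 hq).2
  by_cases hstar : ∀ k, G.t k = v → ∀ h, G.s h = G.s k → G.t h = v
  · refine ⟨G.inStar v, isDynRegion_inStar hll hacyc hp hstar, fun hR => hll q ?_⟩
    rw [hq, eq_comm, ← mem_inStar, hR]
    exact mem_univ q
  · push Not at hstar
    obtain ⟨k, hk, h, hhk, hhv⟩ := hstar
    refine ⟨G.outStar (G.s k), isDynRegion_outStar hll hacyc rfl fun k' hk' h' hh' =>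
      source_eq_of_target_eq_outNbr hA hB hll rfl hhk (by rw [hk]; exact Ne.symm hhv) hk' hh',
      fun hR => hll k ?_⟩
    have hq' : q ∈ G.outStar (G.s k) := hR ▸ mem_univ q
    rw [hk, ← hq, mem_outStar.1 hq']

/-- The edges outside `T` reachable from `g` through edges outside `T` sharing a vertex form a
dynamical region. -/
lemma exists_isDynRegion_disjoint (hacyc : G.IsCohAcyclic) {T : Finset G.E}
    (hT : G.IsDynRegion T) {g : G.E} (hg : g ∉ T) :
    ∃ S : Finset G.E, G.IsDynRegion S ∧ Disjoint S T := by
  set r : G.E → G.E → Prop := fun e f =>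
    f ∉ T ∧ ∃ x, (G.s e = x ∨ G.t e = x) ∧ (G.s f = x ∨ G.t f = x)
  set S : Finset G.E := univ.filter (Relation.ReflTransGen r g)
  have hmem : ∀ {e}, e ∈ S ↔ Relation.ReflTransGen r g e := by simp [S]
  have hST : ∀ e ∈ S, e ∉ T := fun e he => (hmem.1 he).cases_tail.elim
    (fun h => h ▸ hg) fun ⟨_, _, hce⟩ => hce.1
  have hext : ∀ {k h : G.E} {x : G.V}, k ∈ S → (G.s k = x ∨ G.t k = x) → h ∉ T →
      (G.s h = x ∨ G.t h = x) → h ∈ S := fun hk hkx hhT hhx =>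
    hmem.2 ((hmem.1 hk).tail ⟨hhT, _, hkx, hhx⟩)
  have hreach : ∀ f ∈ S, Relation.EqvGen (G.adjIn S) (G.s g) (G.s f) := by
    intro f hf
    induction hmem.1 hf with
    | refl => exact .refl _
    | tail hgb hbc ih =>
      have hc := hmem.2 (hgb.tail hbc)
      obtain ⟨-, x, hbx, hcx⟩ := hbc
      exact ((ih (hmem.2 hgb)).trans _ _ _ (eqvGen_adjIn_source (hmem.2 hgb) hbx)).trans _ _ _
        (eqvGen_adjIn_source hc hcx).symm
  refine ⟨S, ⟨⟨g, hmem.2 .refl⟩, fun e he f hf => ((hreach e he).symm).trans _ _ _ (hreach f hf),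
    ?_, fun c hc => (hacyc c hc).elim⟩, disjoint_left.2 hST⟩
  rintro x ⟨k, hk, hkx⟩ ⟨h, hh, hhx⟩
  have hhT : h ∈ T := by_contra fun hhT => (mem_sdiff.1 hh).2 (hext hk hkx hhT hhx)
  obtain ⟨hu, hsT, hsC⟩ :=
    hT.2.2.1 x ⟨h, hhT, hhx⟩ ⟨k, mem_sdiff.2 ⟨mem_univ _, hST k hk⟩, hkx⟩
  exact ⟨hu, hsC.of_subset_at fun e he _ => mem_sdiff.2 ⟨mem_univ _, hST e he⟩,
    hsT.of_subset_at fun e he hex => by_contra fun heT => (mem_sdiff.1 he).2 (hext hk hkx heT hex)⟩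

lemma IsDynRegion.exists_isDynModule_subset {S : Finset G.E} (hS : G.IsDynRegion S) :
    ∃ T ⊆ S, G.IsDynModule T := by
  obtain ⟨T, hTS, hT⟩ := exists_minimal_le_of_wellFoundedLT _ S hS
  exact ⟨T, hTS, hT.prop, fun R hRT hR => le_antisymm hRT (hT.2 hR hRT)⟩

lemma eq_univ_of_isDynRegion (hacyc : G.IsCohAcyclic) (hmod : ∃! R, G.IsDynModule R)
    {S : Finset G.E} (hS : G.IsDynRegion S) : S = univ := by
  obtain ⟨R₀, hR₀, huniq⟩ := hmod
  have hR₀univ : R₀ = univ := eq_univ_of_forall fun g => by_contra fun hg => by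
    obtain ⟨S', hS', hdisj⟩ := exists_isDynRegion_disjoint hacyc hR₀.1 hg
    obtain ⟨T, hTS', hT⟩ := hS'.exists_isDynModule_subset
    obtain ⟨e, he⟩ := hT.1.1
    exact disjoint_left.1 hdisj (hTS' he) (huniq T hT ▸ he)
  obtain ⟨T, hTS, hT⟩ := hS.exists_isDynModule_subset
  exact eq_univ_of_forall fun e => hTS (huniq T hT ▸ hR₀univ ▸ mem_univ e)

lemma adj_closed_outNbr_or_inNbr (hB : ¬G.HasPatternB) (hBrev : ¬G.HasPatternBrev)
    (hns : ∀ e f : G.E, G.t e ≠ G.s f) (e : G.E) ⦃x y : G.V⦄ (hxy : G.adj x y)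
    (hx : (∃ h, G.s h = G.s e ∧ G.t h = x) ∨ ∃ h, G.s h = x ∧ G.t h = G.t e) :
    (∃ h, G.s h = G.s e ∧ G.t h = y) ∨ ∃ h, G.s h = y ∧ G.t h = G.t e := by
  obtain ⟨g, ⟨rfl, rfl⟩ | ⟨rfl, rfl⟩⟩ := hxy
  · rcases hx with ⟨h, -, hh⟩ | ⟨h, hh, hhe⟩
    · exact (hns h g hh).elim
    by_cases hy : G.t g = G.t e
    · exact .inl ⟨e, rfl, hy.symm⟩
    by_cases hxa : G.s g = G.s e
    · exact .inl ⟨g, hxa, rfl⟩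
    exact (hBrev ⟨G.t g, G.s g, G.t e, G.s e, hns g g, hy, hns g e,
      fun h' => hns h g (hhe.trans h'.symm), hxa, hns e e,
      ⟨g, rfl, rfl⟩, ⟨h, hh, hhe⟩, ⟨e, rfl, rfl⟩⟩).elim
  · rcases hx with ⟨h, hh, hhe⟩ | ⟨h, hh, -⟩
    · by_cases hy : G.s g = G.s e
      · exact .inr ⟨e, hy.symm, rfl⟩
      by_cases hxb : G.t g = G.t e
      · exact .inr ⟨g, rfl, hxb⟩
      exact (hB ⟨G.s g, G.t g, G.s e, G.t e, (hns g g).symm, hy, (hns e g).symm,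
        fun h' => hns h h (hhe.trans (h'.trans hh.symm)), hxb, (hns e e).symm,
        ⟨g, rfl, rfl⟩, ⟨h, hh, hhe⟩, ⟨e, rfl, rfl⟩⟩).elim
    · exact (hns g h hh.symm).elim

lemma source_eq_or_target_eq (hB : ¬G.HasPatternB) (hBrev : ¬G.HasPatternBrev)
    (hconn : G.ConnectedD) (hns : ∀ e f : G.E, G.t e ≠ G.s f) (e f : G.E) :
    G.s e = G.s f ∨ G.t e = G.t f := by
  by_contra! hef
  rcases hconn.forall_of_adj_closed (adj_closed_outNbr_or_inNbr hB hBrev hns e)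
    (.inr ⟨e, rfl, rfl⟩) (G.s f) with ⟨h, -, hh⟩ | ⟨h, hh, hhe⟩
  · exact hns h f hh
  · exact hBrev ⟨G.t f, G.s f, G.t e, G.s e, hns f f, fun h' => hef.2 h'.symm,
      hns f e, (hns e f).symm, fun h' => hef.1 h'.symm, hns e e,
      ⟨f, rfl, rfl⟩, ⟨h, hh, hhe⟩, ⟨e, rfl, rfl⟩⟩

lemma isMultipath_iff_card_le_one (hacyc : G.IsCohAcyclic) (hB : ¬G.HasPatternB)
    (hBrev : ¬G.HasPatternBrev) (hconn : G.ConnectedD) (hns : ∀ e f : G.E, G.t e ≠ G.s f)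
    (m : Finset G.E) : G.IsMultipath m ↔ m.card ≤ 1 := by
  refine ⟨fun ⟨_, hs, ht, _⟩ => card_le_one.2 fun a ha b hb =>
    (source_eq_or_target_eq hB hBrev hconn hns a b).elim (hs a ha b hb) (ht a ha b hb),
    fun h1 => ⟨fun e _ => (hns e e).symm, fun a ha b hb _ => card_le_one.1 h1 a ha b hb,
      fun a ha b hb _ => card_le_one.1 h1 a ha b hb, fun ⟨c, hc, _⟩ => hacyc c hc⟩⟩

end DiGraph

theorem unique_module_uniform_matroid_general (G : DiGraph)
    (hMP : G.IsMPDigraph) (hconn : G.ConnectedD) (hll : G.Loopless)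
    (hnc : ¬G.IsCohCycleGraph)
    (hmod : ∃! R : Finset G.E, DiGraph.IsDynModule G R) :
    ∃ φ : G.E ≃ Fin (Fintype.card G.E),
      ∀ m : Finset G.E, G.IsMultipath m ↔ (m.image φ).card ≤ 1 := by
  obtain ⟨⟨hA, -, hB, hBrev⟩, hMP2⟩ := hMP
  have hacyc := hMP2.isCohAcyclic hconn hll hnc
  have hns : ∀ e f : G.E, G.t e ≠ G.s f := fun e f hef =>
    let ⟨_, hR, hne⟩ := DiGraph.exists_isDynRegion_ne_univ hll hA hB hacyc
      (DiGraph.unstableG_of_target_eq_source hef rfl)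
    hne (DiGraph.eq_univ_of_isDynRegion hacyc hmod hR)
  refine ⟨Fintype.equivFin G.E, fun m => ?_⟩
  rw [Finset.card_image_of_injective m (Fintype.equivFin G.E).injective]
  exact DiGraph.isMultipath_iff_card_le_one hacyc hB hBrev hconn hns m

/-- A connected loopless MP-digraph which is not a coherently
oriented cycle and has a unique dynamical module has multipath matroid
isomorphic to the uniform matroid `U_{1,|E(G)|}` (on ground set
`{1,…,|E(G)|}`, independent sets = subsets of cardinality at most 1). -/
theorem unique_module_uniform_matroid (G : DiGraph) (hU : G.EdgeUnique)
    (hMP : G.IsMPDigraph) (hconn : G.ConnectedD) (hll : G.Loopless)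
    (hnc : ¬G.IsCohCycleGraph)
    (hmod : ∃! R : Finset G.E, DiGraph.IsDynModule G R) :
    ∃ φ : G.E ≃ Fin (Fintype.card G.E),
      ∀ m : Finset G.E, G.IsMultipath m ↔ (m.image φ).card ≤ 1 :=
  unique_module_uniform_matroid_general G hMP hconn hll hnc hmod
end
end

section
/- Every multipath matroid (the matroid M_G = (E(G), Mult(G)) of any MP-digraph G) is regular (representable over every field) and graphic. -/
set_option autoImplicit false

noncomputable section

attribute [local instance] Classical.propDecidable

/-!
By (MP1) no non-loop edge lies both in a linear sink and in a linear source, and by (MP2) every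
coherent cycle of length at least two is a whole component. Hence a set of edges is a multipath
exactly when it contains no loop, at most one edge of each linear sink and of each linear source,
and no complete coherent cycle. This is the cycle matroid of a multigraph that keeps every coherent
cycle as a polygon, turns each linear sink or source into a bundle of parallel edges and every
other edge into a bridge. Its signed incidence vectors represent it over every field: a multipath
is a forest there and can be peeled off leaf by leaf, while any cycle yields a signed relation.
-/

lemma finRotate_eq_mk_mod {n : ℕ} (i : Fin n) :
    finRotate n i = ⟨(i.val + 1) % n, Nat.mod_lt _ i.pos⟩ := by
  have := i.neZero
  ext
  rw [finRotate_apply, Fin.val_add, Fin.val_one', Nat.add_mod_mod]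

lemma exists_not_and_finRotate {n : ℕ} {p : Fin n → Prop} (h₁ : ∃ i, p i)
    (h₂ : ∃ i, ¬p i) :
    ∃ i, ¬p i ∧ p (finRotate n i) := by
  obtain ⟨j, hj⟩ := h₁
  obtain ⟨i, hi⟩ := h₂
  obtain ⟨n, rfl⟩ : ∃ k, n = k + 2 := by
    refine Nat.exists_eq_add_of_le' (Nat.lt_of_le_of_ne i.pos ?_)
    rintro rfl
    exact hi (Subsingleton.elim j i ▸ hj)
  by_contra! h
  have hpow : ∀ k : ℕ, ¬p ((finRotate (n + 2) ^ k) i) := by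
    intro k
    induction k with
    | zero => exact hi
    | succ k ih => rw [pow_succ', Equiv.Perm.mul_apply]; exact h _ ih
  obtain ⟨k, hk⟩ := isCycle_finRotate.exists_pow_eq (x := i) (y := j) (by simp) (by simp)
  exact hpow k (hk ▸ hj)

namespace DiGraph

section Incidence

variable (H : DiGraph) (R : Type*) [Ring R]

def incidence (e : H.E) : H.V → R :=
  Pi.single (H.s e) 1 - Pi.single (H.t e) 1

abbrev toMultigraph : Multigraph where
  V := H.V
  E := H.E
  ends e := s(H.s e, H.t e)

def IsLeaf (m : Finset H.E) (e : H.E) (v : H.V) : Prop :=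
  e ∈ m ∧ H.s e ≠ H.t e ∧ (H.s e = v ∨ H.t e = v) ∧
    ∀ f ∈ m, f ≠ e → H.s f ≠ v ∧ H.t f ≠ v

variable {H R}

lemma incidence_apply_eq_zero {f : H.E} {v : H.V} (hs : H.s f ≠ v) (ht : H.t f ≠ v) :
    H.incidence R f v = 0 := by
  simp [incidence, Ne.symm hs, Ne.symm ht]

lemma incidence_apply_ne_zero [Nontrivial R] {e : H.E} {v : H.V} (hloop : H.s e ≠ H.t e)
    (hv : H.s e = v ∨ H.t e = v) : H.incidence R e v ≠ 0 := by
  rcases hv with rfl | rfl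
  · simp [incidence, Ne.symm hloop]
  · simp [incidence, hloop]

lemma IsLeaf.incidence_notMem_span {K : Type*} [DivisionRing K] {m : Finset H.E} {e : H.E}
    {v : H.V} (h : H.IsLeaf m e v) :
    H.incidence K e ∉ Submodule.span K (H.incidence K '' ↑(m.erase e)) := by
  obtain ⟨-, hloop, hv, hothers⟩ := h
  have hspan : Submodule.span K (H.incidence K '' ↑(m.erase e)) ≤
      LinearMap.ker (LinearMap.proj v : (H.V → K) →ₗ[K] K) := by
    rw [Submodule.span_le]
    rintro _ ⟨f, hf, rfl⟩
    obtain ⟨hfe, hfm⟩ := Finset.mem_erase.mp hf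
    exact incidence_apply_eq_zero (hothers f hfm hfe).1 (hothers f hfm hfe).2
  exact fun hmem => incidence_apply_ne_zero hloop hv (hspan hmem)

theorem linearIndepOn_incidence_of_exists_isLeaf {K : Type*} [DivisionRing K] (m : Finset H.E)
    (h : ∀ m' ⊆ m, m'.Nonempty → ∃ e v, H.IsLeaf m' e v) :
    LinearIndepOn K (H.incidence K) ↑m := by
  induction m using Finset.strongInduction with
  | H m ih =>
    rcases m.eq_empty_or_nonempty with rfl | hne
    · simp
    obtain ⟨e, v, hleaf⟩ := h m subset_rfl hne
    rw [← Finset.insert_erase hleaf.1, Finset.coe_insert,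
      linearIndepOn_insert (by simp)]
    exact ⟨ih _ (Finset.erase_ssubset hleaf.1) fun m' hm' => h m' (hm'.trans
      (Finset.erase_subset _ _)), hleaf.incidence_notMem_span⟩

theorem not_linearIndepOn_incidence_of_hasCycleIn [Nontrivial R] {m : Finset H.E}
    (hcyc : H.toMultigraph.HasCycleIn m) : ¬LinearIndepOn R (H.incidence R) ↑m := by
  obtain ⟨n, ed, vx, hn, hed, -, hmem, hends⟩ := hcyc
  intro hli
  have hli' : LinearIndependent R (fun i => H.incidence R (ed i)) :=
    hli.comp (fun i => ⟨ed i, hmem i⟩) fun i j hij => hed (congrArg Subtype.val hij)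
  let δ : H.V → H.V → R := fun v => Pi.single v 1
  -- orienting each edge along the cycle makes the sum of the incidence vectors telescope
  let σ : Fin n → R := fun i => if H.s (ed i) = vx i then 1 else -1
  have horient : ∀ i, σ i • H.incidence R (ed i) = δ (vx i) - δ (vx (finRotate n i)) := by
    intro i
    have hi := hends i
    rw [← finRotate_eq_mk_mod] at hi
    change s(H.s (ed i), H.t (ed i)) = _ at hi
    rw [Sym2.eq_iff] at hi
    rcases hi with ⟨hs, ht⟩ | ⟨hs, ht⟩
    · simp only [σ, δ, incidence, hs, ht, if_pos, one_smul]
    · by_cases hv : vx (finRotate n i) = vx i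
      · simp only [σ, δ, incidence, hs, ht, hv, if_pos, one_smul]
      · simp only [σ, δ, incidence, hs, ht, hv, if_false, neg_smul, one_smul, neg_sub]
  have hsum : ∑ i, σ i • H.incidence R (ed i) = 0 := by
    simp only [horient, Finset.sum_sub_distrib]
    rw [Equiv.sum_comp (finRotate n) (fun i => δ (vx i)), sub_self]
  have hσ := Fintype.linearIndependent_iff.mp hli' σ hsum ⟨0, hn⟩
  by_cases h : H.s (ed ⟨0, hn⟩) = vx ⟨0, hn⟩ <;> simp [σ, h] at hσ

lemma hasCycleIn_toMultigraph_of_parallel {m : Finset H.E} {e f : H.E}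
    (he : e ∈ m) (hf : f ∈ m) (hef : e ≠ f) (hs : H.s e = H.s f) (ht : H.t e = H.t f)
    (hloop : H.s e ≠ H.t e) : H.toMultigraph.HasCycleIn m := by
  refine ⟨2, ![e, f], ![H.s e, H.t e], two_pos, ?_, ?_, ?_, ?_⟩
  · intro i j hij
    fin_cases i <;> fin_cases j <;> simp_all [eq_comm]
  · intro i j hij
    fin_cases i <;> fin_cases j <;> simp_all [eq_comm]
  · intro i
    fin_cases i <;> simpa
  · intro i
    fin_cases i
    · rfl
    · simp [hs, ht, Sym2.eq_swap]

end Incidence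

variable {G : DiGraph} {m : Finset G.E} {c : List G.E} {e f : G.E}

lemma IsCohCycle.tgt_eq_src_finRotate (hc : IsCohCycle G c) (i : Fin c.length) :
    G.t (c.get i) = G.s (c.get (finRotate _ i)) := by
  rw [finRotate_eq_mk_mod]
  exact hc.2.2.2 i

lemma IsCohCycle.get_injective (hc : IsCohCycle G c) : Function.Injective c.get :=
  hc.2.1.injective_get

lemma IsCohCycle.eq_of_src_eq (hc : IsCohCycle G c) (he : e ∈ c) (hf : f ∈ c)
    (h : G.s e = G.s f) : e = f :=
  List.inj_on_of_nodup_map hc.2.2.1 he hf h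

lemma IsCohCycle.eq_of_tgt_eq (hc : IsCohCycle G c) (he : e ∈ c) (hf : f ∈ c)
    (h : G.t e = G.t f) : e = f := by
  obtain ⟨i, rfl⟩ := List.mem_iff_get.mp he
  obtain ⟨j, rfl⟩ := List.mem_iff_get.mp hf
  rw [hc.tgt_eq_src_finRotate, hc.tgt_eq_src_finRotate] at h
  have := hc.get_injective (hc.eq_of_src_eq (List.get_mem _ _) (List.get_mem _ _) h)
  rw [(finRotate _).injective this]

lemma IsCohCycle.exists_src_eq_tgt (hc : IsCohCycle G c) (he : e ∈ c) :
    ∃ g ∈ c, G.s g = G.t e := by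
  obtain ⟨i, rfl⟩ := List.mem_iff_get.mp he
  exact ⟨_, List.get_mem _ _, (hc.tgt_eq_src_finRotate i).symm⟩

lemma IsCohCycle.two_le_length (hc : IsCohCycle G c) (he : e ∈ c) (hloop : G.s e ≠ G.t e) :
    2 ≤ c.length := by
  obtain ⟨i, rfl⟩ := List.mem_iff_get.mp he
  by_contra! hlen
  have : Subsingleton (Fin c.length) := Fin.subsingleton_iff_le_one.mpr (by omega)
  exact hloop (by rw [hc.tgt_eq_src_finRotate i, Subsingleton.elim (finRotate _ i) i])

lemma isCohCycle_singleton (h : G.s e = G.t e) : IsCohCycle G [e] :=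
  ⟨List.cons_ne_nil _ _, List.nodup_singleton _, List.nodup_singleton _,
    fun i => by simp [h.symm]⟩

lemma MP2.mem_of_touch (h2 : MP2 G) (hc : IsCohCycle G c) (hlen : 2 ≤ c.length)
    {g : G.E} (hg : g ∈ c) (h : G.s f = G.s g ∨ G.t f = G.s g) : f ∈ c :=
  h2 c hc hlen f ⟨g, hg, h.imp Eq.symm Eq.symm⟩

lemma MP2.eq_of_src_eq (h2 : MP2 G) (hc : IsCohCycle G c) (hlen : 2 ≤ c.length)
    (he : e ∈ c) (h : G.s f = G.s e) : f = e :=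
  hc.eq_of_src_eq (h2.mem_of_touch hc hlen he (.inl h)) he h

lemma MP2.eq_of_tgt_eq (h2 : MP2 G) (hc : IsCohCycle G c) (hlen : 2 ≤ c.length)
    (he : e ∈ c) (h : G.t f = G.t e) : f = e := by
  obtain ⟨g, hg, hge⟩ := hc.exists_src_eq_tgt he
  exact hc.eq_of_tgt_eq (h2.mem_of_touch hc hlen hg (.inr (h.trans hge.symm))) he h

lemma IsMultipath.mono {m' : Finset G.E} (hm : IsMultipath G m) (h : m' ⊆ m) :
    IsMultipath G m' := by
  obtain ⟨hloop, hs, ht, hcyc⟩ := hm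
  exact ⟨fun e he => hloop e (h he), fun e he f hf => hs e (h he) f (h hf),
    fun e he f hf => ht e (h he) f (h hf),
    fun ⟨c, hc, hsub⟩ => hcyc ⟨c, hc, fun g hg => h (hsub g hg)⟩⟩

/-- A non-loop edge with both a co-source and a co-target partner would span a copy of
pattern (A) or (B), depending on whether the two partners share an endpoint. -/
lemma MP1.eq_or_eq_of_src_eq_of_tgt_eq (hU : EdgeUnique G) (h1 : MP1 G) {g : G.E}
    (he : G.s e ≠ G.t e) (hf : G.s f ≠ G.t f) (hg : G.s g ≠ G.t g)
    (hsf : G.s f = G.s e) (htg : G.t g = G.t e) : f = e ∨ g = e := by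
  by_contra! hne
  have hft : G.t f ≠ G.s e := fun h => hf (hsf.trans h.symm)
  have hft' : G.t f ≠ G.t e := fun h => hne.1 (hU f e hsf h hf)
  have hgs : G.s g ≠ G.t e := fun h => hg (h.trans htg.symm)
  have hgs' : G.s g ≠ G.s e := fun h => hne.2 (hU g e h htg hg)
  by_cases hgf : G.s g = G.t f
  · exact h1.1 ⟨G.t f, G.s e, G.t e, hft, hft', he,
      ⟨f, hsf, rfl⟩, ⟨g, hgf, htg⟩, ⟨e, rfl, rfl⟩⟩
  · exact h1.2.2.1 ⟨G.s g, G.t e, G.s e, G.t f, hgs, hgs', hgf, he.symm, hft'.symm, hft.symm,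
      ⟨g, rfl, htg⟩, ⟨e, rfl, rfl⟩, ⟨f, hsf, rfl⟩⟩

section

variable (G)

def OnCohCycle (e : G.E) : Prop := ∃ c, IsCohCycle G c ∧ e ∈ c

def InLinearSink (e : G.E) : Prop := ∃ f ≠ e, G.s f ≠ G.t f ∧ G.t f = G.t e

def InLinearSource (e : G.E) : Prop := ∃ f ≠ e, G.s f ≠ G.t f ∧ G.s f = G.s e

/-- Edges off the coherent cycles fall into parallel classes of the graphic matroid: the
linear sink at a vertex, the linear source at a vertex, or the edge alone. -/
def classKey (e : G.E) : (G.V ⊕ G.V) ⊕ G.E :=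
  if InLinearSink G e then .inl (.inl (G.t e))
  else if InLinearSource G e then .inl (.inr (G.s e)) else .inr e

end

lemma MP2.not_onCohCycle_of_src_eq (h2 : MP2 G) (hfe : f ≠ e) (he : G.s e ≠ G.t e)
    (h : G.s f = G.s e) : ¬OnCohCycle G e := fun ⟨_, hc, hec⟩ =>
  hfe (h2.eq_of_src_eq hc (hc.two_le_length hec he) hec h)

lemma MP2.not_onCohCycle_of_tgt_eq (h2 : MP2 G) (hfe : f ≠ e) (he : G.s e ≠ G.t e)
    (h : G.t f = G.t e) : ¬OnCohCycle G e := fun ⟨_, hc, hec⟩ =>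
  hfe (h2.eq_of_tgt_eq hc (hc.two_le_length hec he) hec h)

lemma classKey_eq_of_tgt_eq (hef : e ≠ f) (he : G.s e ≠ G.t e) (hf : G.s f ≠ G.t f)
    (h : G.t e = G.t f) : classKey G e = classKey G f := by
  have hse : InLinearSink G e := ⟨f, hef.symm, hf, h.symm⟩
  have hsf : InLinearSink G f := ⟨e, hef, he, h⟩
  simp [classKey, hse, hsf, h]

lemma classKey_eq_of_src_eq (hU : EdgeUnique G) (h1 : MP1 G) (hef : e ≠ f)
    (he : G.s e ≠ G.t e) (hf : G.s f ≠ G.t f) (h : G.s e = G.s f) :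
    classKey G e = classKey G f := by
  have hne : ¬InLinearSink G e := fun ⟨g, hge, hg, hgt⟩ =>
    (h1.eq_or_eq_of_src_eq_of_tgt_eq hU he hf hg h.symm hgt).elim hef.symm hge
  have hnf : ¬InLinearSink G f := fun ⟨g, hgf, hg, hgt⟩ =>
    (h1.eq_or_eq_of_src_eq_of_tgt_eq hU hf he hg h hgt).elim hef hgf
  have hse : InLinearSource G e := ⟨f, hef.symm, hf, h.symm⟩
  have hsf : InLinearSource G f := ⟨e, hef, he, h⟩
  simp [classKey, hne, hnf, hse, hsf, h]

lemma eq_or_src_eq_or_tgt_eq_of_classKey_eq (h : classKey G e = classKey G f) :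
    e = f ∨ G.s e = G.s f ∨ G.t e = G.t f := by
  unfold classKey at h
  split_ifs at h <;> simp_all

lemma IsMultipath.eq_of_classKey_eq (hm : IsMultipath G m) (he : e ∈ m)
    (hf : f ∈ m) (h : classKey G e = classKey G f) : e = f := by
  rcases eq_or_src_eq_or_tgt_eq_of_classKey_eq h with h | h | h
  · exact h
  · exact hm.2.1 e he f hf h
  · exact hm.2.2.1 e he f hf h

variable (G) in
/-- Coherent cycles (loops included) live on a copy of `V(G)`; each parallel class `k` of
`classKey` becomes a bundle of parallel edges between the private vertices `(k, false)` and
`(k, true)`. -/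
abbrev realizer : DiGraph where
  V := G.V ⊕ ((G.V ⊕ G.V) ⊕ G.E) × Bool
  E := G.E
  s e := if OnCohCycle G e then .inl (G.s e) else .inr (classKey G e, false)
  t e := if OnCohCycle G e then .inl (G.t e) else .inr (classKey G e, true)

lemma realizer_s_of_onCohCycle (h : OnCohCycle G e) : (realizer G).s e = .inl (G.s e) :=
  if_pos h

lemma realizer_t_of_onCohCycle (h : OnCohCycle G e) : (realizer G).t e = .inl (G.t e) :=
  if_pos h

lemma realizer_s_eq_inl {v : G.V} (h : (realizer G).s e = .inl v) :
    OnCohCycle G e ∧ G.s e = v := by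
  by_cases hc : OnCohCycle G e <;> simp_all [realizer]

lemma realizer_t_eq_inl {v : G.V} (h : (realizer G).t e = .inl v) :
    OnCohCycle G e ∧ G.t e = v := by
  by_cases hc : OnCohCycle G e <;> simp_all [realizer]

lemma IsMultipath.isLeaf_realizer_of_not_onCohCycle (hm : IsMultipath G m) (he : e ∈ m)
    (hcyc : ¬OnCohCycle G e) : (realizer G).IsLeaf m e (.inr (classKey G e, true)) := by
  refine ⟨he, by simp [realizer, hcyc], .inr (by simp [realizer, hcyc]), fun f hf hfe => ?_⟩
  by_cases hfc : OnCohCycle G f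
  · simp [realizer, hfc]
  · simpa [realizer, hfc] using fun h => hfe (hm.eq_of_classKey_eq hf he h)

/-- On a coherent cycle that meets `m` but is not contained in it, an edge of `m` whose
predecessor on the cycle is not in `m` is a leaf at its source. -/
lemma IsMultipath.exists_isLeaf_realizer_of_onCohCycle (h2 : MP2 G) (hm : IsMultipath G m)
    (he : e ∈ m) (hcyc : OnCohCycle G e) : ∃ g v, (realizer G).IsLeaf m g v := by
  obtain ⟨c, hc, hec⟩ := hcyc
  obtain ⟨j, rfl⟩ := List.mem_iff_get.mp hec
  have hlen := hc.two_le_length hec (hm.1 _ he)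
  have hnot : ∃ i, c.get i ∉ m := by
    by_contra! h
    refine hm.2.2.2 ⟨c, hc, fun g hg => ?_⟩
    obtain ⟨k, rfl⟩ := List.mem_iff_get.mp hg
    exact h k
  obtain ⟨i, hi, hsucc⟩ :=
    exists_not_and_finRotate (p := fun i => c.get i ∈ m) ⟨j, he⟩ hnot
  set g := c.get (finRotate _ i)
  have hgc : OnCohCycle G g := ⟨c, hc, List.get_mem _ _⟩
  refine ⟨g, .inl (G.s g), hsucc, by simpa [realizer, hgc] using hm.1 g hsucc,
    .inl (by simp [realizer, hgc]), fun f hf hfg => ⟨fun h => ?_, fun h => ?_⟩⟩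
  · exact hfg (h2.eq_of_src_eq hc hlen (List.get_mem _ _) (realizer_s_eq_inl h).2)
  · have hft : G.t f = G.t (c.get i) :=
      (realizer_t_eq_inl h).2.trans (hc.tgt_eq_src_finRotate i).symm
    exact hi (h2.eq_of_tgt_eq hc hlen (List.get_mem _ _) hft ▸ hf)

lemma IsMultipath.exists_isLeaf_realizer (h2 : MP2 G) (hm : IsMultipath G m)
    (hne : m.Nonempty) : ∃ g v, (realizer G).IsLeaf m g v := by
  obtain ⟨e, he⟩ := hne
  by_cases hcyc : OnCohCycle G e
  · exact hm.exists_isLeaf_realizer_of_onCohCycle h2 he hcyc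
  · exact ⟨e, _, hm.isLeaf_realizer_of_not_onCohCycle he hcyc⟩

lemma hasCycleIn_realizer_of_isCohCycle (hc : IsCohCycle G c)
    (hsub : ∀ g ∈ c, g ∈ m) : (realizer G).toMultigraph.HasCycleIn m := by
  have hon : ∀ i, OnCohCycle G (c.get i) := fun i => ⟨c, hc, List.get_mem _ _⟩
  refine ⟨c.length, c.get, fun i => .inl (G.s (c.get i)), List.length_pos_iff.mpr hc.1,
    hc.get_injective, fun i j hij => hc.get_injective ?_, fun i => hsub _ (List.get_mem _ _),
    fun i => ?_⟩
  · exact hc.eq_of_src_eq (List.get_mem _ _) (List.get_mem _ _) (Sum.inl_injective hij)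
  · change s((realizer G).s _, (realizer G).t _) = _
    rw [realizer_s_of_onCohCycle (hon i), realizer_t_of_onCohCycle (hon i), hc.2.2.2 i]

lemma hasCycleIn_realizer_of_classKey_eq (he : e ∈ m) (hf : f ∈ m) (hef : e ≠ f)
    (hec : ¬OnCohCycle G e) (hfc : ¬OnCohCycle G f) (h : classKey G e = classKey G f) :
    (realizer G).toMultigraph.HasCycleIn m :=
  hasCycleIn_toMultigraph_of_parallel he hf hef (by simp [realizer, hec, hfc, h])
    (by simp [realizer, hec, hfc, h]) (by simp [realizer, hec])

theorem hasCycleIn_realizer_of_not_isMultipath (hU : EdgeUnique G) (hMP : IsMPDigraph G)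
    (hm : ¬IsMultipath G m) : (realizer G).toMultigraph.HasCycleIn m := by
  by_cases hloop : ∃ e ∈ m, G.s e = G.t e
  · obtain ⟨e, he, hl⟩ := hloop
    exact hasCycleIn_realizer_of_isCohCycle (isCohCycle_singleton hl) (by simpa)
  push Not at hloop
  simp only [IsMultipath, not_and_or, not_not] at hm
  rcases hm with hm | hm | hm | ⟨c, hc, hsub⟩
  · exact absurd hloop hm
  · push Not at hm
    obtain ⟨e, he, f, hf, hs, hef⟩ := hm
    exact hasCycleIn_realizer_of_classKey_eq he hf hef
      (hMP.2.not_onCohCycle_of_src_eq (Ne.symm hef) (hloop e he) hs.symm)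
      (hMP.2.not_onCohCycle_of_src_eq hef (hloop f hf) hs)
      (classKey_eq_of_src_eq hU hMP.1 hef (hloop e he) (hloop f hf) hs)
  · push Not at hm
    obtain ⟨e, he, f, hf, ht, hef⟩ := hm
    exact hasCycleIn_realizer_of_classKey_eq he hf hef
      (hMP.2.not_onCohCycle_of_tgt_eq (Ne.symm hef) (hloop e he) ht.symm)
      (hMP.2.not_onCohCycle_of_tgt_eq hef (hloop f hf) ht)
      (classKey_eq_of_tgt_eq hef (hloop e he) (hloop f hf) ht)
  · exact hasCycleIn_realizer_of_isCohCycle hc hsub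

theorem IsMultipath.linearIndepOn_realizer_incidence {K : Type*} [DivisionRing K]
    (h2 : MP2 G) (hm : IsMultipath G m) :
    LinearIndepOn K ((realizer G).incidence K) ↑m :=
  linearIndepOn_incidence_of_exists_isLeaf (H := realizer G) m fun _ hm' hne =>
    (hm.mono hm').exists_isLeaf_realizer h2 hne

theorem isMultipath_iff_linearIndepOn_realizer_incidence (hU : EdgeUnique G)
    (hMP : IsMPDigraph G) {K : Type*} [DivisionRing K] :
    IsMultipath G m ↔ LinearIndepOn K ((realizer G).incidence K) ↑m :=
  ⟨fun hm => hm.linearIndepOn_realizer_incidence hMP.2, fun hli => by_contra fun hm =>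
    not_linearIndepOn_incidence_of_hasCycleIn (hasCycleIn_realizer_of_not_isMultipath hU hMP hm)
      hli⟩

theorem isMultipath_iff_not_hasCycleIn_realizer (hU : EdgeUnique G) (hMP : IsMPDigraph G) :
    IsMultipath G m ↔ ¬(realizer G).toMultigraph.HasCycleIn m :=
  ⟨fun hm hcyc => not_linearIndepOn_incidence_of_hasCycleIn hcyc
      (hm.linearIndepOn_realizer_incidence (K := ℚ) hMP.2),
    fun h => by_contra fun hm => h (hasCycleIn_realizer_of_not_isMultipath hU hMP hm)⟩

lemma repOver_of_linearIndepOn {F : Type} [Field F] {W : Type} [Fintype W] (v : G.E → W → F)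
    (h : ∀ m, IsMultipath G m ↔ LinearIndepOn F v ↑m) : RepOver G F := by
  let φ := LinearEquiv.funCongrLeft F F (Fintype.equivFin W).symm
  refine ⟨Fintype.card W, fun i e => v e ((Fintype.equivFin W).symm i), fun m => ?_⟩
  rw [h m]
  exact (LinearMap.linearIndependent_iff φ.toLinearMap φ.ker).symm

end DiGraph

/-- Every multipath matroid is regular (representable over
every field) and graphic (isomorphic to the matroid of subforests of a finite
undirected multigraph). -/
theorem multipath_matroid_regular_and_graphic (G : DiGraph) (hU : G.EdgeUnique)
    (hMP : G.IsMPDigraph) :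
    (∀ (F : Type) [Field F], DiGraph.RepOver G F) ∧
    (∃ (M : Multigraph) (φ : G.E ≃ M.E),
      ∀ m : Finset G.E, G.IsMultipath m ↔ ¬M.HasCycleIn (m.image φ)) :=
  ⟨fun _ _ => DiGraph.repOver_of_linearIndepOn _ fun _ =>
      DiGraph.isMultipath_iff_linearIndepOn_realizer_incidence hU hMP,
    G.realizer.toMultigraph, Equiv.refl _, fun m => by
      simpa only [Equiv.coe_refl, Finset.image_id] using
        DiGraph.isMultipath_iff_not_hasCycleIn_realizer hU hMP⟩

end
end

section
/- Let G be a digraph and let e be an edge of G that is not a loop. Let Mult_e(G) be the set of multipaths of G containing e, ordered by inclusion, and let C̃_e(G) be the digraph obtained from the MP-contraction G ⫽ e by deleting all loops at the newly added vertex x. Then the map C_e sending each multipath H containing e to C̃_e(H) is an order isomorphism between the poset Mult_e(G) and the poset Mult(C̃_e(G)) of multipaths of C̃_e(G), ordered by inclusion. -/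
set_option autoImplicit false

noncomputable section

attribute [local instance] Classical.propDecidable

/-! Write `e = (v, w)` and let `φ` send `v` and `w` to the new vertex `x` and fix every
other vertex. An edge `f ≠ e` survives in `C̃_e(G)` iff it neither leaves `v`, nor enters
`w`, nor runs from `w` to `v`, and it then becomes the edge `φ (s f) → φ (t f)`. Hence `φ` is
injective on the sources and on the targets of surviving edges, and the only new incidence is
`t f = v`, `s g = w` turning into `t f = x = s g`, which in `G` is the path `f, e, g`. So the
degree conditions of a multipath transfer in both directions, and so does acyclicity, once a
coherent cycle is traded for a nonempty edge set in which every edge has a successor: adding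
`e` to such a set of `C̃_e(G)`, or removing it from one of `G`, keeps that property. The
inverse of `C_e` is `mc ↦ mc ∪ {e}`. -/

-- `CVert` is a type synonym; without this, `rw` cannot see through it.
attribute [reducible] DiGraph.CVert

theorem exists_periodic_segment_injective {α : Type*} [Finite α] (u : ℕ → α) :
    ∃ d, 0 < d ∧ ∃ i, u i = u (i + d) ∧ Function.Injective fun k : Fin d => u (i + k) := by
  have hrep : ∃ d, 0 < d ∧ ∃ i, u i = u (i + d) := by
    obtain ⟨a, b, hab, h⟩ := Finite.exists_ne_map_eq_of_infinite u
    rcases Nat.lt_or_gt_of_ne hab with hab | hab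
    · exact ⟨b - a, by omega, a, by rwa [Nat.add_sub_cancel' hab.le]⟩
    · exact ⟨a - b, by omega, b, by rw [Nat.add_sub_cancel' hab.le]; exact h.symm⟩
  -- With `d` minimal, a repetition inside the segment would be a shorter period.
  obtain ⟨hd, i, hi⟩ := Nat.find_spec hrep
  refine ⟨_, hd, i, hi, fun a b hab => ?_⟩
  by_contra hne
  rcases Nat.lt_or_gt_of_ne (Fin.val_ne_of_ne hne) with h | h
  · refine Nat.find_min hrep (m := b - a) (by omega) ⟨by omega, i + a, ?_⟩
    simpa [Nat.add_assoc, Nat.add_sub_cancel' h.le] using hab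
  · refine Nat.find_min hrep (m := a - b) (by omega) ⟨by omega, i + b, ?_⟩
    simpa [Nat.add_assoc, Nat.add_sub_cancel' h.le] using hab.symm

namespace DiGraph

variable {G : DiGraph}

def SuccClosed (G : DiGraph) (S : Finset G.E) : Prop :=
  ∀ f ∈ S, ∃ g ∈ S, G.t f = G.s g

theorem IsCohCycle.succClosed_toFinset {c : List G.E} (hc : G.IsCohCycle c) :
    G.SuccClosed c.toFinset := by
  intro f hf
  obtain ⟨i, rfl⟩ := List.get_of_mem (List.mem_toFinset.1 hf)
  exact ⟨_, List.mem_toFinset.2 (List.get_mem _ _), hc.2.2.2 i⟩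

theorem exists_isCohCycle_of_succClosed {S : Finset G.E} (hS : S.Nonempty)
    (hcl : G.SuccClosed S) : ∃ c, G.IsCohCycle c ∧ ∀ g ∈ c, g ∈ S := by
  choose! next hnext_mem hnext using hcl
  obtain ⟨f₀, hf₀⟩ := hS
  set walk : ℕ → G.E := fun k => next^[k] f₀
  have hwalk_mem : ∀ k, walk k ∈ S := by
    intro k
    induction k with
    | zero => exact hf₀
    | succ k ih => simpa only [walk, Function.iterate_succ_apply'] using hnext_mem _ ih
  have hwalk_t : ∀ k, G.t (walk k) = G.s (walk (k + 1)) := fun k => by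
    simp only [walk, Function.iterate_succ_apply']
    exact hnext _ (hwalk_mem k)
  obtain ⟨d, hd, i, hi, hinj⟩ := exists_periodic_segment_injective fun k => G.s (walk k)
  refine ⟨List.ofFn fun k : Fin d => walk (i + k), ⟨?_, ?_, ?_, ?_⟩, ?_⟩
  · simpa using hd.ne'
  · exact List.Nodup.of_map G.s (by rw [List.map_ofFn]; exact List.nodup_ofFn.2 hinj)
  · rw [List.map_ofFn]; exact List.nodup_ofFn.2 hinj
  · rintro ⟨k, hk⟩
    simp only [List.get_eq_getElem, List.getElem_ofFn, List.length_ofFn] at hk ⊢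
    rw [hwalk_t, Nat.add_assoc]
    rcases Nat.lt_or_ge (k + 1) d with hlt | hge
    · rw [Nat.mod_eq_of_lt hlt]
    · rw [show k + 1 = d by omega, Nat.mod_self, Nat.add_zero, ← hi]
  · simp only [List.mem_ofFn]
    rintro g ⟨k, rfl⟩
    exact hwalk_mem _

theorem not_exists_isCohCycle_iff {m : Finset G.E} :
    (¬∃ c, G.IsCohCycle c ∧ ∀ g ∈ c, g ∈ m) ↔
      ∀ S ⊆ m, S.Nonempty → ¬G.SuccClosed S := by
  refine ⟨fun h S hSm hS hcl => ?_, fun h ⟨c, hc, hcm⟩ => ?_⟩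
  · obtain ⟨c, hc, hcS⟩ := exists_isCohCycle_of_succClosed hS hcl
    exact h ⟨c, hc, fun g hg => hSm (hcS g hg)⟩
  · refine h c.toFinset (fun g hg => hcm g (List.mem_toFinset.1 hg)) ?_ hc.succClosed_toFinset
    exact ⟨_, List.mem_toFinset.2 (List.getLast_mem hc.1)⟩

theorem isMultipath_iff {m : Finset G.E} :
    G.IsMultipath m ↔ (∀ f ∈ m, G.s f ≠ G.t f) ∧
      (∀ f ∈ m, ∀ g ∈ m, G.s f = G.s g → f = g) ∧
      (∀ f ∈ m, ∀ g ∈ m, G.t f = G.t g → f = g) ∧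
      ∀ S ⊆ m, S.Nonempty → ¬G.SuccClosed S := by
  rw [IsMultipath, not_exists_isCohCycle_iff]

section Contraction

variable {e : G.E}

def contractVertex (G : DiGraph) (e : G.E) (u : G.V) : CVert G e :=
  if h : u = G.s e ∨ u = G.t e then Sum.inr ()
  else Sum.inl ⟨u, by push Not at h; exact h⟩

theorem contractVertex_eq_iff {a b : G.V} :
    contractVertex G e a = contractVertex G e b ↔
      a = b ∨ (a = G.s e ∨ a = G.t e) ∧ (b = G.s e ∨ b = G.t e) := by
  unfold contractVertex
  by_cases ha : a = G.s e ∨ a = G.t e <;> by_cases hb : b = G.s e ∨ b = G.t e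
  · rw [dif_pos ha, dif_pos hb]; tauto
  · rw [dif_pos ha, dif_neg hb]; simp only [reduceCtorEq, false_iff]; grind
  · rw [dif_neg ha, dif_pos hb]; simp only [reduceCtorEq, false_iff]; grind
  · rw [dif_neg ha, dif_neg hb, Sum.inl.injEq, Subtype.mk.injEq]; tauto

theorem contrS_eq_inr_iff {f : G.E} :
    contrS G e f = Sum.inr () ↔ G.s f = G.s e ∨ G.s f = G.t e ∨ G.t f = G.t e := by
  unfold contrS
  by_cases h : G.s f = G.s e ∨ G.s f = G.t e ∨ G.t f = G.t e
  · rw [dif_pos h]; tauto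
  · rw [dif_neg h]; simp only [reduceCtorEq, false_iff]; exact h

theorem contrT_eq_inr_iff {f : G.E} :
    contrT G e f = Sum.inr () ↔ G.t f = G.s e ∨ G.t f = G.t e ∨ G.s f = G.s e := by
  unfold contrT
  by_cases h : G.t f = G.s e ∨ G.t f = G.t e ∨ G.s f = G.s e
  · rw [dif_pos h]; tauto
  · rw [dif_neg h]; simp only [reduceCtorEq, false_iff]; exact h

def Survives (G : DiGraph) (e f : G.E) : Prop :=
  f ≠ e ∧ G.s f ≠ G.s e ∧ G.t f ≠ G.t e ∧ ¬(G.s f = G.t e ∧ G.t f = G.s e)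

theorem survives_iff {f : G.E} :
    G.Survives e f ↔ f ≠ e ∧ ¬(contrS G e f = Sum.inr () ∧ contrT G e f = Sum.inr ()) := by
  rw [Survives, contrS_eq_inr_iff, contrT_eq_inr_iff]
  tauto

theorem survives_of_tildeC (f : (tildeC G e).E) : G.Survives e f.val :=
  survives_iff.2 f.2

theorem contrS_of_survives {f : G.E} (hf : G.Survives e f) :
    contrS G e f = contractVertex G e (G.s f) := by
  obtain ⟨-, hs, ht, -⟩ := hf
  unfold contrS contractVertex
  by_cases h : G.s f = G.t e
  · rw [dif_pos (Or.inr (Or.inl h)), dif_pos (Or.inr h)]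
  · rw [dif_neg (by tauto), dif_neg (by tauto)]

theorem contrT_of_survives {f : G.E} (hf : G.Survives e f) :
    contrT G e f = contractVertex G e (G.t f) := by
  obtain ⟨-, hs, ht, -⟩ := hf
  unfold contrT contractVertex
  by_cases h : G.t f = G.s e
  · rw [dif_pos (Or.inl h), dif_pos (Or.inl h)]
  · rw [dif_neg (by tauto), dif_neg (by tauto)]

theorem tildeC_s_eq_t_iff (f : (tildeC G e).E) :
    (tildeC G e).s f = (tildeC G e).t f ↔ G.s f.val = G.t f.val := by
  obtain ⟨f, hf⟩ := f
  have hf := survives_iff.2 hf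
  show contrS G e f = contrT G e f ↔ G.s f = G.t f
  rw [contrS_of_survives hf, contrT_of_survives hf, contractVertex_eq_iff]
  unfold Survives at hf
  grind

theorem tildeC_s_eq_iff (f g : (tildeC G e).E) :
    (tildeC G e).s f = (tildeC G e).s g ↔ G.s f.val = G.s g.val := by
  obtain ⟨f, hf⟩ := f
  obtain ⟨g, hg⟩ := g
  have hf := survives_iff.2 hf
  have hg := survives_iff.2 hg
  show contrS G e f = contrS G e g ↔ G.s f = G.s g
  rw [contrS_of_survives hf, contrS_of_survives hg, contractVertex_eq_iff]
  unfold Survives at hf hg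
  grind

theorem tildeC_t_eq_iff (f g : (tildeC G e).E) :
    (tildeC G e).t f = (tildeC G e).t g ↔ G.t f.val = G.t g.val := by
  obtain ⟨f, hf⟩ := f
  obtain ⟨g, hg⟩ := g
  have hf := survives_iff.2 hf
  have hg := survives_iff.2 hg
  show contrT G e f = contrT G e g ↔ G.t f = G.t g
  rw [contrT_of_survives hf, contrT_of_survives hg, contractVertex_eq_iff]
  unfold Survives at hf hg
  grind

theorem tildeC_t_eq_s_iff (f g : (tildeC G e).E) :
    (tildeC G e).t f = (tildeC G e).s g ↔
      G.t f.val = G.s g.val ∨ G.t f.val = G.s e ∧ G.s g.val = G.t e := by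
  obtain ⟨f, hf⟩ := f
  obtain ⟨g, hg⟩ := g
  have hf := survives_iff.2 hf
  have hg := survives_iff.2 hg
  show contrT G e f = contrS G e g ↔ G.t f = G.s g ∨ G.t f = G.s e ∧ G.s g = G.t e
  rw [contrT_of_survives hf, contrS_of_survives hg, contractVertex_eq_iff]
  unfold Survives at hf hg
  grind

theorem survives_of_mem_isMultipath {m : Finset G.E} (hm : G.IsMultipath m) (he : e ∈ m)
    {f : G.E} (hf : f ∈ m) (hfe : f ≠ e) : G.Survives e f := by
  obtain ⟨-, hs, ht, hacyc⟩ := isMultipath_iff.1 hm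
  refine ⟨hfe, fun h => hfe (hs f hf e he h), fun h => hfe (ht f hf e he h),
    fun ⟨hsf, htf⟩ => ?_⟩
  refine hacyc {e, f} (Finset.insert_subset he (Finset.singleton_subset_iff.2 hf))
    (Finset.insert_nonempty _ _) ?_
  simp only [SuccClosed, Finset.mem_insert, Finset.mem_singleton, forall_eq_or_imp, forall_eq,
    exists_eq_or_imp, exists_eq_left]
  exact ⟨Or.inr hsf.symm, Or.inl htf⟩

-- The image is taken under `fun f : (tildeC G e).E => f.val` rather than `Subtype.val`, whose
-- domain is the unfolded subtype, so that `Finset.mem_image` applies.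
theorem SuccClosed.exists_of_tildeC {S' : Finset (tildeC G e).E} (hS' : S'.Nonempty)
    (hcl : (tildeC G e).SuccClosed S') :
    ∃ S ⊆ insert e (S'.image fun f : (tildeC G e).E => f.val),
      S.Nonempty ∧ G.SuccClosed S := by
  have hsucc : ∀ f ∈ S', ∃ g ∈ S',
      G.t f.val = G.s g.val ∨ G.t f.val = G.s e ∧ G.s g.val = G.t e :=
    fun f hf => (hcl f hf).imp fun g ⟨hg, hfg⟩ => ⟨hg, (tildeC_t_eq_s_iff f g).1 hfg⟩
  by_cases hx : ∃ f ∈ S', G.t f.val = G.s e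
  · refine ⟨_, subset_rfl, Finset.insert_nonempty _ _, ?_⟩
    simp only [SuccClosed, Finset.mem_insert, Finset.mem_image]
    rintro _ (rfl | ⟨f, hf, rfl⟩)
    · obtain ⟨f, hf, hfe⟩ := hx
      obtain ⟨g, hg, hfg | hfg⟩ := hsucc f hf
      · exact absurd (hfe.symm.trans hfg) (survives_of_tildeC g).2.1.symm
      · exact ⟨g.val, Or.inr ⟨g, hg, rfl⟩, hfg.2.symm⟩
    · obtain ⟨g, hg, hfg | hfg⟩ := hsucc f hf
      · exact ⟨g.val, Or.inr ⟨g, hg, rfl⟩, hfg⟩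
      · exact ⟨e, Or.inl rfl, hfg.1⟩
  · refine ⟨_, Finset.subset_insert _ _, hS'.image _, ?_⟩
    simp only [SuccClosed, Finset.mem_image]
    rintro _ ⟨f, hf, rfl⟩
    obtain ⟨g, hg, hfg | hfg⟩ := hsucc f hf
    · exact ⟨g.val, ⟨g, hg, rfl⟩, hfg⟩
    · exact absurd ⟨f, hf, hfg.1⟩ hx

theorem SuccClosed.filter_tildeC (hne : G.s e ≠ G.t e) {S : Finset G.E} (hS : S.Nonempty)
    (hcl : G.SuccClosed S) (hsurv : ∀ f ∈ S, f ≠ e → G.Survives e f) :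
    (Finset.univ.filter fun f : (tildeC G e).E => f.val ∈ S).Nonempty ∧
      (tildeC G e).SuccClosed (Finset.univ.filter fun f : (tildeC G e).E => f.val ∈ S) := by
  have hsucc : ∀ f ∈ S, ∃ g ∈ S, g ≠ e ∧
      (G.t f = G.s g ∨ G.t f = G.s e ∧ G.s g = G.t e) := by
    intro f hf
    obtain ⟨g, hg, hfg⟩ := hcl f hf
    by_cases hge : g = e
    · subst hge
      obtain ⟨g', hg', heg'⟩ := hcl g hg
      exact ⟨g', hg', fun h => hne (h ▸ heg'.symm), Or.inr ⟨hfg, heg'.symm⟩⟩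
    · exact ⟨g, hg, hge, Or.inl hfg⟩
  simp only [SuccClosed, Finset.mem_filter, Finset.mem_univ, true_and]
  refine ⟨?_, fun f hf => ?_⟩
  · obtain ⟨f, hf⟩ := hS
    obtain ⟨g, hg, hge, -⟩ := hsucc f hf
    exact ⟨⟨g, survives_iff.1 (hsurv g hg hge)⟩,
      Finset.mem_filter.2 ⟨Finset.mem_univ _, hg⟩⟩
  · obtain ⟨g, hg, hge, hfg⟩ := hsucc f.val hf
    exact ⟨⟨g, survives_iff.1 (hsurv g hg hge)⟩, hg, (tildeC_t_eq_s_iff f _).2 hfg⟩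

theorem isMultipath_tildeC_filter {m : Finset G.E} (hm : G.IsMultipath m) (he : e ∈ m) :
    (tildeC G e).IsMultipath (Finset.univ.filter fun f : (tildeC G e).E => f.val ∈ m) := by
  obtain ⟨hloop, hs, ht, hacyc⟩ := isMultipath_iff.1 hm
  rw [isMultipath_iff]
  simp only [Finset.mem_filter, Finset.mem_univ, true_and]
  refine ⟨fun f hf h => hloop _ hf ((tildeC_s_eq_t_iff f).1 h),
    fun f hf g hg h => Subtype.ext (hs _ hf _ hg ((tildeC_s_eq_iff f g).1 h)),
    fun f hf g hg h => Subtype.ext (ht _ hf _ hg ((tildeC_t_eq_iff f g).1 h)),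
    fun S' hS'm hS' hcl => ?_⟩
  obtain ⟨S, hS, hSne, hScl⟩ := hcl.exists_of_tildeC hS'
  refine hacyc S (hS.trans (Finset.insert_subset he ?_)) hSne hScl
  intro f hf
  obtain ⟨f', hf', rfl⟩ := Finset.mem_image.1 hf
  exact (Finset.mem_filter.1 (hS'm hf')).2

theorem subset_iff_filter_subset {m m' : Finset G.E} (hm : G.IsMultipath m) (he : e ∈ m)
    (he' : e ∈ m') :
    m ⊆ m' ↔ (Finset.univ.filter fun f : (tildeC G e).E => f.val ∈ m) ⊆
      (Finset.univ.filter fun f : (tildeC G e).E => f.val ∈ m') := by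
  simp only [Finset.subset_iff, Finset.mem_filter, Finset.mem_univ, true_and]
  refine ⟨fun h f hf => h hf, fun h f hf => ?_⟩
  by_cases hfe : f = e
  · exact hfe ▸ he'
  · exact h (x := ⟨f, survives_iff.1 (survives_of_mem_isMultipath hm he hf hfe)⟩) hf

theorem val_mem_insert_image_iff {mc : Finset (tildeC G e).E} (f : (tildeC G e).E) :
    f.val ∈ insert e (mc.image fun g : (tildeC G e).E => g.val) ↔ f ∈ mc := by
  rw [Finset.mem_insert, Finset.mem_image, or_iff_right f.2.1]
  exact ⟨fun ⟨g, hg, hgf⟩ => Subtype.ext hgf ▸ hg, fun hf => ⟨f, hf, rfl⟩⟩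

theorem isMultipath_insert_image (hne : G.s e ≠ G.t e) {mc : Finset (tildeC G e).E}
    (hmc : (tildeC G e).IsMultipath mc) :
    G.IsMultipath (insert e (mc.image fun g : (tildeC G e).E => g.val)) := by
  obtain ⟨hloop, hs, ht, hacyc⟩ := isMultipath_iff.1 hmc
  rw [isMultipath_iff]
  simp only [Finset.mem_insert, Finset.mem_image]
  refine ⟨?_, ?_, ?_, fun S hS hSne hcl => ?_⟩
  · rintro _ (rfl | ⟨f, hf, rfl⟩)
    · exact hne
    · exact fun h => hloop f hf ((tildeC_s_eq_t_iff f).2 h)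
  · rintro _ (rfl | ⟨f, hf, rfl⟩) _ (rfl | ⟨g, hg, rfl⟩) h
    · rfl
    · exact absurd h.symm (survives_of_tildeC g).2.1
    · exact absurd h (survives_of_tildeC f).2.1
    · rw [hs f hf g hg ((tildeC_s_eq_iff f g).2 h)]
  · rintro _ (rfl | ⟨f, hf, rfl⟩) _ (rfl | ⟨g, hg, rfl⟩) h
    · rfl
    · exact absurd h.symm (survives_of_tildeC g).2.2.1
    · exact absurd h (survives_of_tildeC f).2.2.1
    · rw [ht f hf g hg ((tildeC_t_eq_iff f g).2 h)]
  · have hsurv : ∀ f ∈ S, f ≠ e → G.Survives e f := by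
      intro f hf hfe
      obtain rfl | hf' := Finset.mem_insert.1 (hS hf)
      · exact absurd rfl hfe
      · obtain ⟨f, -, rfl⟩ := Finset.mem_image.1 hf'
        exact survives_of_tildeC f
    obtain ⟨hne', hcl'⟩ := hcl.filter_tildeC hne hSne hsurv
    refine hacyc _ (fun f hf => ?_) hne' hcl'
    rw [← val_mem_insert_image_iff]
    exact Finset.mem_of_subset hS (Finset.mem_filter.1 hf).2

theorem filter_val_mem_insert_image (mc : Finset (tildeC G e).E) :
    (Finset.univ.filter fun f : (tildeC G e).E =>
      f.val ∈ insert e (mc.image fun g : (tildeC G e).E => g.val)) = mc := by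
  ext f
  simp only [Finset.mem_filter, Finset.mem_univ, true_and, val_mem_insert_image_iff]

end Contraction

end DiGraph

open DiGraph in
theorem contraction_poset_isomorphism_general (G : DiGraph)
    (e : G.E) (hne : G.s e ≠ G.t e) :
    (∀ m : Finset G.E, G.IsMultipath m → e ∈ m →
       (tildeC G e).IsMultipath
         (Finset.univ.filter (fun f : (tildeC G e).E => f.val ∈ m))) ∧
    (∀ m m' : Finset G.E, G.IsMultipath m → e ∈ m → G.IsMultipath m' → e ∈ m' →
       (m ⊆ m' ↔
         (Finset.univ.filter (fun f : (tildeC G e).E => f.val ∈ m)) ⊆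
           (Finset.univ.filter (fun f : (tildeC G e).E => f.val ∈ m')))) ∧
    (∀ mc : Finset (tildeC G e).E, (tildeC G e).IsMultipath mc →
       ∃ m : Finset G.E, G.IsMultipath m ∧ e ∈ m ∧
         (Finset.univ.filter (fun f : (tildeC G e).E => f.val ∈ m)) = mc) :=
  ⟨fun _ hm he => isMultipath_tildeC_filter hm he,
    fun _ _ hm he _ he' => subset_iff_filter_subset hm he he',
    fun mc hmc => ⟨_, isMultipath_insert_image hne hmc, Finset.mem_insert_self _ _,
      filter_val_mem_insert_image mc⟩⟩

open DiGraph in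
/-- For a non-loop edge `e` of a digraph `G`, the map
`C_e`, sending a multipath `m` of `G` containing `e` to the set of its edges
surviving in `C̃_e(G)` (the MP-contraction `G ⫽ e` with the loops at the new
vertex deleted), is an order isomorphism from the poset `Mult_e(G)` of
multipaths of `G` containing `e` onto the poset `Mult(C̃_e(G))`, both ordered
by inclusion: it is well defined, order preserving and reflecting, and
surjective (hence bijective). -/
theorem contraction_poset_isomorphism (G : DiGraph) (hU : G.EdgeUnique)
    (e : G.E) (hne : G.s e ≠ G.t e) :
    (∀ m : Finset G.E, G.IsMultipath m → e ∈ m →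
       (tildeC G e).IsMultipath
         (Finset.univ.filter (fun f : (tildeC G e).E => f.val ∈ m))) ∧
    (∀ m m' : Finset G.E, G.IsMultipath m → e ∈ m → G.IsMultipath m' → e ∈ m' →
       (m ⊆ m' ↔
         (Finset.univ.filter (fun f : (tildeC G e).E => f.val ∈ m)) ⊆
           (Finset.univ.filter (fun f : (tildeC G e).E => f.val ∈ m')))) ∧
    (∀ mc : Finset (tildeC G e).E, (tildeC G e).IsMultipath mc →
       ∃ m : Finset G.E, G.IsMultipath m ∧ e ∈ m ∧
         (Finset.univ.filter (fun f : (tildeC G e).E => f.val ∈ m)) = mc) :=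
  contraction_poset_isomorphism_general G e hne

end
end
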